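/- Optimal trajectories forward are optimal backward: assume H satisfies (A), g₀, g_T continuous, L the Legendre transform of H in p, U and W the forward and backward value functions for the Bolza and inverse Bolza problems respectively. If x̄ : [0,T] → ℝⁿ is a maximal optimal trajectory in the Bolza problem (U(T,x̄(T)) = U(0,x̄(0)) + ∫₀^T L(x̄,ẋ̄)ds) and U(T,·) = W(T,·), then x̄ is a maximal optimal trajectory in the inverse Bolza problem and U(t,x̄(t)) = W(t,x̄(t)) for all t ∈ [0,T]. -/

import Mathlib

open Set MeasureTheory intervalIntegral



open Set MeasureTheory

/-- Condition (A) on the Hamiltonian. -/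
def CondA {n : ℕ} (H : EuclideanSpace ℝ (Fin n) → EuclideanSpace ℝ (Fin n) → ℝ) : Prop :=
  ∃ M : ℝ, 0 ≤ M ∧ (∀ x, ConvexOn ℝ Set.univ (H x)) ∧
    (∀ x p q, |H x p - H x q| ≤ M * (1 + ‖x‖) * ‖p - q‖) ∧
    (∀ x y p, |H x p - H y p| ≤ M * (1 + ‖p‖) * ‖x - y‖)

/-- The Lagrangian: the Legendre–Fenchel transform of `H` in the second variable,
`L(x,v) = sup_p (⟨v,p⟩ − H(x,p))`, with values in the extended reals. -/
noncomputable def Lag {n : ℕ} (H : EuclideanSpace ℝ (Fin n) → EuclideanSpace ℝ (Fin n) → ℝ)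
    (x v : EuclideanSpace ℝ (Fin n)) : EReal :=
  ⨆ p : EuclideanSpace ℝ (Fin n), ((inner ℝ v p - H x p : ℝ) : EReal)

/-- `x` is absolutely continuous on `[0,T]` with (a.e.) derivative `f`. -/
def IsAC {n : ℕ} (T : ℝ) (x f : ℝ → EuclideanSpace ℝ (Fin n)) : Prop :=
  IntervalIntegrable f volume 0 T ∧
    ∀ t ∈ Set.Icc (0 : ℝ) T, x t = x 0 + ∫ s in (0 : ℝ)..t, f s

/-- `c` is the (finite) running cost `∫ₐᵇ L(x(s), ẋ(s)) ds` of a trajectory. -/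
def HasCost {n : ℕ} (H : EuclideanSpace ℝ (Fin n) → EuclideanSpace ℝ (Fin n) → ℝ)
    (x f : ℝ → EuclideanSpace ℝ (Fin n)) (a b : ℝ) (c : ℝ) : Prop :=
  (∀ s ∈ Set.Icc a b, Lag H (x s) (f s) ≠ ⊤) ∧
    IntervalIntegrable (fun s => (Lag H (x s) (f s)).toReal) volume a b ∧
    c = ∫ s in a..b, (Lag H (x s) (f s)).toReal

/-- The forward value function of the Bolza problem with initial cost `g₀`. -/
noncomputable def fwdVal {n : ℕ} (H : EuclideanSpace ℝ (Fin n) → EuclideanSpace ℝ (Fin n) → ℝ)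
    (T : ℝ) (g₀ : EuclideanSpace ℝ (Fin n) → ℝ)
    (t₀ : ℝ) (x₀ : EuclideanSpace ℝ (Fin n)) : ℝ :=
  sInf {r : ℝ | ∃ x f : ℝ → EuclideanSpace ℝ (Fin n), ∃ c : ℝ,
    IsAC T x f ∧ x t₀ = x₀ ∧ HasCost H x f 0 t₀ c ∧ r = g₀ (x 0) + c}

/-- The backward value function of the inverse Bolza problem with terminal payoff `g`. -/
noncomputable def bwdVal {n : ℕ} (H : EuclideanSpace ℝ (Fin n) → EuclideanSpace ℝ (Fin n) → ℝ)
    (T : ℝ) (g : EuclideanSpace ℝ (Fin n) → ℝ)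
    (t₀ : ℝ) (x₀ : EuclideanSpace ℝ (Fin n)) : ℝ :=
  sSup {r : ℝ | ∃ x f : ℝ → EuclideanSpace ℝ (Fin n), ∃ c : ℝ,
    IsAC T x f ∧ x t₀ = x₀ ∧ HasCost H x f t₀ T c ∧ r = g (x T) - c}

lemma lag_lb {n : ℕ} (H : EuclideanSpace ℝ (Fin n) → EuclideanSpace ℝ (Fin n) → ℝ)
    (x v : EuclideanSpace ℝ (Fin n)) : ((-H x 0 : ℝ) : EReal) ≤ Lag H x v := by
  have := le_iSup (fun p : EuclideanSpace ℝ (Fin n) => ((inner ℝ v p - H x p : ℝ) : EReal)) 0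
  exact le_trans (by simp) this

lemma lag_toReal_lb {n : ℕ} {H : EuclideanSpace ℝ (Fin n) → EuclideanSpace ℝ (Fin n) → ℝ}
    {x v : EuclideanSpace ℝ (Fin n)} (h : Lag H x v ≠ ⊤) :
    -H x 0 ≤ (Lag H x v).toReal := by
  have h1 := lag_lb H x v
  have h2 : ((-H x 0 : ℝ) : EReal).toReal ≤ (Lag H x v).toReal :=
    EReal.toReal_le_toReal h1 (by simp) h
  simpa using h2

lemma velocity_bound {n : ℕ} {H : EuclideanSpace ℝ (Fin n) → EuclideanSpace ℝ (Fin n) → ℝ}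
    {M : ℝ} (hM : 0 ≤ M)
    (hLip : ∀ x p q, |H x p - H x q| ≤ M * (1 + ‖x‖) * ‖p - q‖)
    {x v : EuclideanSpace ℝ (Fin n)} (h : Lag H x v ≠ ⊤) :
    ‖v‖ ≤ M * (1 + ‖x‖) := by
  by_contra hv
  push_neg at hv
  apply h
  rw [eq_top_iff]
  rw [show (⊤ : EReal) = ⨆ k : ℕ, ((k : ℝ) : EReal) by
    refine le_antisymm ?_ le_top
    refine le_of_forall_lt fun r hr => ?_
    induction r with
    | bot => exact lt_of_lt_of_le (by simp) (le_iSup (fun k : ℕ => ((k : ℝ) : EReal)) 0)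
    | coe r =>
        obtain ⟨k, hk⟩ := exists_nat_gt r
        exact lt_of_lt_of_le (by exact_mod_cast hk) (le_iSup (fun k : ℕ => ((k : ℝ) : EReal)) k)
    | top => exact absurd hr (lt_irrefl _)]
  refine iSup_le fun k => ?_
  -- show (k : EReal) ≤ Lag H x v
  have hvpos : 0 < ‖v‖ := lt_of_le_of_lt (by positivity) hv
  set ε : ℝ := ‖v‖ * (‖v‖ - M * (1 + ‖x‖)) with hε
  have hεpos : 0 < ε := mul_pos hvpos (by linarith)
  obtain ⟨m, hm⟩ := exists_nat_gt ((k + H x 0) / ε)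
  have hmε : k + H x 0 < m * ε := by
    rw [div_lt_iff₀ hεpos] at hm; linarith
  refine le_trans ?_ (le_iSup (fun p : EuclideanSpace ℝ (Fin n) => ((inner ℝ v p - H x p : ℝ) : EReal)) ((m : ℝ) • v))
  have hH1 : H x ((m:ℝ) • v) ≤ H x 0 + M * (1 + ‖x‖) * (m * ‖v‖) := by
    have := hLip x ((m:ℝ) • v) 0
    rw [abs_le] at this
    have h2 := this.1
    have : ‖(m:ℝ) • v - 0‖ = m * ‖v‖ := by
      simp [norm_smul, abs_of_nonneg (by positivity : (0:ℝ) ≤ (m:ℝ))]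
    linarith [hLip x ((m:ℝ) • v) 0, (abs_le.mp (hLip x ((m:ℝ) • v) 0)).2, this ▸ (abs_le.mp (hLip x ((m:ℝ) • v) 0)).2]
  have hin : (inner ℝ v ((m:ℝ) • v) : ℝ) = m * ‖v‖^2 := by
    rw [real_inner_smul_right, real_inner_self_eq_norm_sq]
  have : (k : ℝ) ≤ inner ℝ v ((m:ℝ) • v) - H x ((m:ℝ) • v) := by
    rw [hin]
    have : m * ‖v‖^2 - (H x 0 + M * (1 + ‖x‖) * (m * ‖v‖)) = m * ε - H x 0 := by
      rw [hε]; ring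
    nlinarith
  exact_mod_cast this

lemma gronwall_bound {n : ℕ} {M T : ℝ} (hM : 1 ≤ M) (hT : 0 < T)
    {x f : ℝ → EuclideanSpace ℝ (Fin n)} (hAC : IsAC T x f)
    (hf : ∀ s ∈ Icc (0:ℝ) T, ‖f s‖ ≤ M * (1 + ‖x s‖)) :
    ∀ s ∈ Icc (0:ℝ) T, ‖x s‖ ≤ ‖x T‖ + (1 + ‖x T‖) * Real.exp (M * T) := by
  have hM0 : 0 < M := lt_of_lt_of_le one_pos hM
  obtain ⟨hfi, hx⟩ := hAC
  set g : ℝ → ℝ := (Icc (0:ℝ) T).indicator (fun τ => ‖f τ‖) with hg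
  have hfn : IntegrableOn (fun τ => ‖f τ‖) (Icc (0:ℝ) T) volume := by
    rw [integrableOn_Icc_iff_integrableOn_Ioc]
    have := hfi.norm
    rwa [intervalIntegrable_iff_integrableOn_Ioc_of_le hT.le] at this
  have hg_int : Integrable g volume := by
    rw [hg]
    exact hfn.integrable_indicator measurableSet_Icc
  have hg_ii : ∀ a b : ℝ, IntervalIntegrable g volume a b := fun a b =>
    hg_int.intervalIntegrable
  have hg_nonneg : ∀ τ, 0 ≤ g τ := fun τ => by
    rw [hg]; exact Set.indicator_nonneg (fun τ _ => norm_nonneg _) τ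
  set u : ℝ → ℝ := fun s => ∫ τ in s..T, g τ with hu_def
  have hu_cont : Continuous u := by
    have h1 : Continuous fun s : ℝ => ∫ τ in (0:ℝ)..s, g τ :=
      intervalIntegral.continuous_primitive hg_ii 0
    have : u = fun s => (∫ τ in (0:ℝ)..T, g τ) - ∫ τ in (0:ℝ)..s, g τ := by
      funext s
      rw [hu_def]
      have := intervalIntegral.integral_add_adjacent_intervals (hg_ii 0 s) (hg_ii s T)
      dsimp only
      linarith
    rw [this]
    exact continuous_const.sub h1
  have hu_nonneg : ∀ τ, τ ≤ T → 0 ≤ u τ := fun τ hτ =>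
    intervalIntegral.integral_nonneg hτ (fun y _ => hg_nonneg y)
  -- ‖x s‖ ≤ ‖x T‖ + u s
  have hxb : ∀ s ∈ Icc (0:ℝ) T, ‖x s‖ ≤ ‖x T‖ + u s := by
    intro s hs
    have hxT := hx T ⟨le_refl 0 |>.trans hT.le, le_refl T⟩
    have hxs := hx s hs
    have hsplit := intervalIntegral.integral_add_adjacent_intervals
      (hfi.mono_set (by rw [uIcc_of_le hs.1, uIcc_of_le hT.le]; exact Icc_subset_Icc le_rfl hs.2))
      (hfi.mono_set (by rw [uIcc_of_le hs.2, uIcc_of_le hT.le]; exact Icc_subset_Icc hs.1 le_rfl))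
    have hdiff : x T - x s = ∫ τ in s..T, f τ := by
      rw [hxT, hxs]; rw [← hsplit]; abel
    have h1 : ‖x s‖ ≤ ‖x T‖ + ‖∫ τ in s..T, f τ‖ := by
      have : x s = x T - ∫ τ in s..T, f τ := by rw [← hdiff]; abel
      rw [this]
      exact norm_sub_le _ _
    have h2 : ‖∫ τ in s..T, f τ‖ ≤ ∫ τ in s..T, ‖f τ‖ :=
      intervalIntegral.norm_integral_le_integral_norm hs.2
    have h3 : (∫ τ in s..T, ‖f τ‖) = u s := by
      rw [hu_def]
      refine intervalIntegral.integral_congr fun τ hτ => ?_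
      rw [uIcc_of_le hs.2] at hτ
      rw [hg, Set.indicator_of_mem (show τ ∈ Icc (0:ℝ) T from ⟨hs.1.trans hτ.1, hτ.2⟩)]
    linarith
  set a0 : ℝ := M * (1 + ‖x T‖) with ha0
  have ha0_nonneg : 0 ≤ a0 := by positivity
  set G : ℝ → ℝ := fun s => ∫ τ in s..T, u τ with hG_def
  have hu_ii : ∀ a b : ℝ, IntervalIntegrable u volume a b := fun a b =>
    hu_cont.intervalIntegrable a b
  -- u s ≤ a0 * (T - s) + M * G s on [0,T]
  have hu_key : ∀ s ∈ Icc (0:ℝ) T, u s ≤ a0 * (T - s) + M * G s := by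
    intro s hs
    have hmono : (∫ τ in s..T, g τ) ≤ ∫ τ in s..T, (a0 + M * u τ) := by
      refine intervalIntegral.integral_mono_on hs.2 (hg_ii s T)
        (by exact (continuous_const.add (continuous_const.mul hu_cont)).intervalIntegrable s T) ?_
      intro τ hτ
      have hτ' : τ ∈ Icc (0:ℝ) T := ⟨hs.1.trans hτ.1, hτ.2⟩
      have : g τ = ‖f τ‖ := Set.indicator_of_mem hτ' _
      rw [this]
      have h1 := hf τ hτ'
      have h2 := hxb τ hτ'
      have h3 : M * (1 + ‖x τ‖) ≤ M * (1 + ‖x T‖ + u τ) := by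
        apply mul_le_mul_of_nonneg_left _ hM0.le
        linarith
      calc ‖f τ‖ ≤ M * (1 + ‖x τ‖) := h1
        _ ≤ M * (1 + ‖x T‖ + u τ) := h3
        _ = a0 + M * u τ := by rw [ha0]; ring
    have hadd : (∫ τ in s..T, (a0 + M * u τ)) = a0 * (T - s) + M * G s := by
      rw [intervalIntegral.integral_add (intervalIntegrable_const)
        (by exact (continuous_const.mul hu_cont).intervalIntegrable s T : IntervalIntegrable (fun τ => M * u τ) volume s T)]
      rw [intervalIntegral.integral_const, hG_def]
      rw [intervalIntegral.integral_const_mul]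
      simp [smul_eq_mul, mul_comm]
    rw [hu_def] at *
    calc (∫ τ in s..T, g τ) ≤ ∫ τ in s..T, (a0 + M * u τ) := hmono
      _ = a0 * (T - s) + M * G s := hadd
  -- G has derivative -(u s)
  have hG_deriv : ∀ s : ℝ, HasDerivAt G (-(u s)) s := by
    intro s
    have h1 : HasDerivAt (fun t => ∫ τ in T..t, u τ) (u s) s := by
      exact intervalIntegral.integral_hasDerivAt_right (hu_ii T s)
        (hu_cont.stronglyMeasurableAtFilter _ _) hu_cont.continuousAt
    have h2 : G = fun t => -(∫ τ in T..t, u τ) := by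
      funext t
      rw [hG_def]
      dsimp only
      rw [intervalIntegral.integral_symm t T, neg_neg]
    rw [h2]
    exact h1.neg
  have hG_nonneg : ∀ s ∈ Icc (0:ℝ) T, 0 ≤ G s := by
    intro s hs
    exact intervalIntegral.integral_nonneg hs.2 (fun τ hτ => hu_nonneg τ hτ.2)
  -- Lyapunov function
  set Wf : ℝ → ℝ := fun s => Real.exp (M * s) * (M * G s + a0 * (T - s) + a0 / M) with hWf
  have hWf_deriv : ∀ s : ℝ, HasDerivAt Wf
      (Real.exp (M * s) * (M * (M * G s + a0 * (T - s)) - M * u s)) s := by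
    intro s
    have he : HasDerivAt (fun t : ℝ => Real.exp (M * t)) (M * Real.exp (M * s)) s := by
      have := (Real.hasDerivAt_exp (M * s)).comp s ((hasDerivAt_id s).const_mul M)
      simpa [mul_comm, Function.comp_def] using this
    have hb : HasDerivAt (fun t => M * G t + a0 * (T - t) + a0 / M)
        (M * (-(u s)) + a0 * (-1)) s := by
      have h1 := (hG_deriv s).const_mul M
      have h2 : HasDerivAt (fun t : ℝ => a0 * (T - t)) (a0 * (-1)) s := by
        have := ((hasDerivAt_id s).const_sub T).const_mul a0
        simpa using this
      simpa using (h1.add h2).add_const (a0 / M)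
    have := he.mul hb
    refine this.congr_deriv ?_
    have hMne : M ≠ 0 := hM0.ne'
    have hk : M * (a0 / M) = a0 := by field_simp
    linear_combination (Real.exp (M * s)) * hk
  have hWf_mono : MonotoneOn Wf (Icc (0:ℝ) T) := by
    apply monotoneOn_of_deriv_nonneg (convex_Icc 0 T)
    · have hWc : Continuous Wf :=
        (Differentiable.continuous (fun s => (hWf_deriv s).differentiableAt))
      exact hWc.continuousOn
    · intro s hs
      exact (hWf_deriv s).differentiableAt.differentiableWithinAt
    · intro s hs
      rw [(hWf_deriv s).deriv]
      rw [interior_Icc] at hs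
      have := hu_key s ⟨hs.1.le, hs.2.le⟩
      have he : 0 < Real.exp (M * s) := Real.exp_pos _
      have h0 : 0 ≤ Real.exp (M * s) * (M * (a0 * (T - s) + M * G s - u s)) :=
        mul_nonneg he.le (mul_nonneg hM0.le (by linarith))
      have heq : Real.exp (M * s) * (M * (M * G s + a0 * (T - s)) - M * u s)
          = Real.exp (M * s) * (M * (a0 * (T - s) + M * G s - u s)) := by ring
      rw [heq]
      exact h0
  intro s hs
  have hTm : T ∈ Icc (0:ℝ) T := ⟨hT.le, le_refl T⟩
  have hWle : Wf s ≤ Wf T := hWf_mono hs hTm hs.2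
  have hGT : G T = 0 := by rw [hG_def]; simp
  have hWfT : Wf T = (1 + ‖x T‖) * Real.exp (M * T) := by
    rw [hWf]
    dsimp only
    rw [hGT, ha0]
    field_simp
    ring
  have hB_nonneg : 0 ≤ M * G s + a0 * (T - s) + a0 / M := by
    have := hG_nonneg s hs
    have h2 : 0 ≤ a0 * (T - s) := mul_nonneg ha0_nonneg (by linarith [hs.2])
    have h3 : 0 ≤ a0 / M := div_nonneg ha0_nonneg hM0.le
    nlinarith
  have hexp1 : 1 ≤ Real.exp (M * s) := Real.one_le_exp (mul_nonneg hM0.le hs.1)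
  have hBW : M * G s + a0 * (T - s) + a0 / M ≤ Wf s := by
    rw [hWf]
    dsimp only
    exact le_mul_of_one_le_left hB_nonneg hexp1
  have hus := hu_key s hs
  have h3 : 0 ≤ a0 / M := div_nonneg ha0_nonneg hM0.le
  have := hxb s hs
  calc ‖x s‖ ≤ ‖x T‖ + u s := hxb s hs
    _ ≤ ‖x T‖ + (M * G s + a0 * (T - s) + a0 / M) := by linarith
    _ ≤ ‖x T‖ + Wf s := by linarith
    _ ≤ ‖x T‖ + Wf T := by linarith
    _ = ‖x T‖ + (1 + ‖x T‖) * Real.exp (M * T) := by rw [hWfT]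

lemma hasCost_split {n : ℕ} {H : EuclideanSpace ℝ (Fin n) → EuclideanSpace ℝ (Fin n) → ℝ}
    {x f : ℝ → EuclideanSpace ℝ (Fin n)} {T c : ℝ}
    (h : HasCost H x f 0 T c) {t : ℝ} (ht : t ∈ Icc (0:ℝ) T) :
    HasCost H x f 0 t (∫ s in (0:ℝ)..t, (Lag H (x s) (f s)).toReal) ∧
    HasCost H x f t T (∫ s in t..T, (Lag H (x s) (f s)).toReal) ∧
    c = (∫ s in (0:ℝ)..t, (Lag H (x s) (f s)).toReal)
        + ∫ s in t..T, (Lag H (x s) (f s)).toReal := by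
  obtain ⟨hne, hint, hc⟩ := h
  have h1 : IntervalIntegrable (fun s => (Lag H (x s) (f s)).toReal) volume 0 t :=
    hint.mono_set (by rw [uIcc_of_le ht.1, uIcc_of_le (ht.1.trans ht.2)]; exact Icc_subset_Icc le_rfl ht.2)
  have h2 : IntervalIntegrable (fun s => (Lag H (x s) (f s)).toReal) volume t T :=
    hint.mono_set (by rw [uIcc_of_le ht.2, uIcc_of_le (ht.1.trans ht.2)]; exact Icc_subset_Icc ht.1 le_rfl)
  refine ⟨⟨fun s hs => hne s ⟨hs.1, hs.2.trans ht.2⟩, h1, rfl⟩,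
    ⟨fun s hs => hne s ⟨ht.1.trans hs.1, hs.2⟩, h2, rfl⟩, ?_⟩
  rw [hc, ← intervalIntegral.integral_add_adjacent_intervals h1 h2]

lemma concat_traj {n : ℕ} {H : EuclideanSpace ℝ (Fin n) → EuclideanSpace ℝ (Fin n) → ℝ}
    {T : ℝ} {z fz y fy : ℝ → EuclideanSpace ℝ (Fin n)} {t c₁ c₂ : ℝ}
    (ht : t ∈ Icc (0:ℝ) T)
    (hACz : IsAC T z fz) (hACy : IsAC T y fy) (hzy : z t = y t)
    (h1 : HasCost H z fz 0 t c₁) (h2 : HasCost H y fy t T c₂) :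
    ∃ w fw : ℝ → EuclideanSpace ℝ (Fin n), IsAC T w fw ∧ w 0 = z 0 ∧ w T = y T ∧
      HasCost H w fw 0 T (c₁ + c₂) := by
  classical
  set fw : ℝ → EuclideanSpace ℝ (Fin n) := fun s => if s < t then fz s else fy s with hfw
  set w : ℝ → EuclideanSpace ℝ (Fin n) := fun s => z 0 + ∫ u in (0:ℝ)..s, fw u with hwdef
  have hT0 : (0:ℝ) ≤ T := ht.1.trans ht.2
  -- integrability of fw on pieces
  have hfz_int : IntervalIntegrable fz volume 0 t :=
    hACz.1.mono_set (by rw [uIcc_of_le ht.1, uIcc_of_le hT0]; exact Icc_subset_Icc le_rfl ht.2)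
  have hfy_int : IntervalIntegrable fy volume t T :=
    hACy.1.mono_set (by rw [uIcc_of_le ht.2, uIcc_of_le hT0]; exact Icc_subset_Icc ht.1 le_rfl)
  have hae1 : ∀ᵐ s ∂(volume : Measure ℝ), s ∈ Set.uIoc (0:ℝ) t → fw s = fz s := by
    refine MeasureTheory.ae_iff.mpr (measure_mono_null ?_ (measure_singleton t))
    intro s hs
    simp only [Set.mem_setOf_eq, not_forall] at hs
    obtain ⟨hs1, hs2⟩ := hs
    rw [Set.uIoc_of_le ht.1] at hs1
    by_contra hst
    have : s < t := lt_of_le_of_ne hs1.2 hst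
    exact hs2 (by simp [hfw, this])
  have heq2 : ∀ s ∈ Ioc t T, fw s = fy s := by
    intro s hs
    simp [hfw, not_lt.mpr hs.1.le]
  have hfw_int1 : IntervalIntegrable fw volume 0 t := by
    rw [intervalIntegrable_iff_integrableOn_Ioc_of_le ht.1]
    rw [intervalIntegrable_iff_integrableOn_Ioc_of_le ht.1] at hfz_int
    refine hfz_int.congr ?_
    refine (MeasureTheory.ae_restrict_iff' measurableSet_Ioc).mpr ?_
    refine MeasureTheory.ae_iff.mpr (measure_mono_null ?_ (measure_singleton t))
    intro s hs
    simp only [Set.mem_setOf_eq, not_forall] at hs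
    obtain ⟨hs1, hs2⟩ := hs
    by_contra hst
    have hlt : s < t := lt_of_le_of_ne hs1.2 hst
    exact hs2 (by simp [hfw, hlt])
  have hfw_int2 : IntervalIntegrable fw volume t T := by
    rw [intervalIntegrable_iff_integrableOn_Ioc_of_le ht.2]
    rw [intervalIntegrable_iff_integrableOn_Ioc_of_le ht.2] at hfy_int
    exact (integrableOn_congr_fun (fun s hs => heq2 s hs) measurableSet_Ioc).mpr hfy_int
  have hfw_int : IntervalIntegrable fw volume 0 T := hfw_int1.trans hfw_int2
  -- w agrees with z on [0,t]
  have hwz : ∀ s ∈ Icc (0:ℝ) t, w s = z s := by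
    intro s hs
    have hint_eq : (∫ u in (0:ℝ)..s, fw u) = ∫ u in (0:ℝ)..s, fz u := by
      refine intervalIntegral.integral_congr_ae ?_
      refine MeasureTheory.ae_iff.mpr (measure_mono_null ?_ (measure_singleton t))
      intro u hu
      simp only [Set.mem_setOf_eq, not_forall] at hu
      obtain ⟨hu1, hu2⟩ := hu
      rw [Set.uIoc_of_le hs.1] at hu1
      by_contra hut
      have : u < t := lt_of_le_of_ne (hu1.2.trans hs.2) hut
      exact hu2 (by simp [hfw, this])
    rw [hwdef]
    dsimp only
    rw [hint_eq, ← hACz.2 s ⟨hs.1, hs.2.trans ht.2⟩]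
  have hwt : w t = y t := by rw [hwz t ⟨ht.1, le_rfl⟩, hzy]
  -- w agrees with y on [t,T]
  have hwy : ∀ s ∈ Icc t T, w s = y s := by
    intro s hs
    have hsplit : (∫ u in (0:ℝ)..s, fw u)
        = (∫ u in (0:ℝ)..t, fw u) + ∫ u in t..s, fw u := by
      rw [intervalIntegral.integral_add_adjacent_intervals hfw_int1
        (hfw_int2.mono_set (by rw [uIcc_of_le hs.1, uIcc_of_le ht.2]; exact Icc_subset_Icc le_rfl hs.2))]
    have h2' : (∫ u in t..s, fw u) = ∫ u in t..s, fy u := by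
      refine intervalIntegral.integral_congr ?_
      intro u hu
      rw [uIcc_of_le hs.1] at hu
      rcases eq_or_lt_of_le hu.1 with h | h
      · subst h; simp [hfw]
      · exact heq2 u ⟨h, hu.2.trans hs.2⟩
    have hy_diff : y s = y t + ∫ u in t..s, fy u := by
      have hyT := hACy.2 s ⟨ht.1.trans hs.1, hs.2⟩
      have hyt := hACy.2 t ⟨ht.1, ht.2⟩
      have := intervalIntegral.integral_add_adjacent_intervals
        (hACy.1.mono_set (by rw [uIcc_of_le ht.1, uIcc_of_le hT0]; exact Icc_subset_Icc le_rfl ht.2))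
        (hACy.1.mono_set (by rw [uIcc_of_le hs.1, uIcc_of_le hT0]; exact Icc_subset_Icc ht.1 hs.2))
      rw [hyT, hyt, ← this]
      abel
    have hwt_eq : w t = z 0 + ∫ u in (0:ℝ)..t, fw u := rfl
    rw [hwdef]
    dsimp only
    rw [hsplit, h2', hy_diff, ← hwt, hwt_eq]
    abel
  refine ⟨w, fw, ⟨hfw_int, fun s hs => ?_⟩, ?_, hwy T ⟨ht.2, le_rfl⟩, ?_⟩
  · rw [hwdef]; dsimp only; simp
  · rw [hwdef]; dsimp only; simp
  · -- HasCost
    obtain ⟨hne1, hint1, hc1⟩ := h1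
    obtain ⟨hne2, hint2, hc2⟩ := h2
    constructor
    · intro s hs
      by_cases h : s < t
      · rw [hwz s ⟨hs.1, h.le⟩, show fw s = fz s by simp [hfw, h]]
        exact hne1 s ⟨hs.1, h.le⟩
      · rw [hwy s ⟨not_lt.mp h, hs.2⟩, show fw s = fy s by simp [hfw, h]]
        exact hne2 s ⟨not_lt.mp h, hs.2⟩
    · -- integrability and value
      have hae_cost1 : ∀ᵐ s ∂(volume : Measure ℝ), s ∈ Set.uIoc (0:ℝ) t →
          (Lag H (w s) (fw s)).toReal = (Lag H (z s) (fz s)).toReal := by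
        refine MeasureTheory.ae_iff.mpr (measure_mono_null ?_ (measure_singleton t))
        intro s hs
        simp only [Set.mem_setOf_eq, not_forall] at hs
        obtain ⟨hs1, hs2⟩ := hs
        rw [Set.uIoc_of_le ht.1] at hs1
        by_contra hst
        have hlt : s < t := lt_of_le_of_ne hs1.2 hst
        exact hs2 (by rw [hwz s ⟨hs1.1.le, hs1.2⟩, show fw s = fz s by simp [hfw, hlt]])
      have heq_cost2 : ∀ s ∈ Set.uIoc t T, (Lag H (w s) (fw s)).toReal
          = (Lag H (y s) (fy s)).toReal := by
        intro s hs
        rw [Set.uIoc_of_le ht.2] at hs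
        rw [hwy s ⟨hs.1.le, hs.2⟩, heq2 s hs]
      have hi1 : IntervalIntegrable (fun s => (Lag H (w s) (fw s)).toReal) volume 0 t := by
        rw [intervalIntegrable_iff_integrableOn_Ioc_of_le ht.1]
        rw [intervalIntegrable_iff_integrableOn_Ioc_of_le ht.1] at hint1
        refine hint1.congr ?_
        refine (MeasureTheory.ae_restrict_iff' measurableSet_Ioc).mpr ?_
        filter_upwards [hae_cost1] with s hs hmem
        exact (hs (by rwa [Set.uIoc_of_le ht.1])).symm
      have hi2 : IntervalIntegrable (fun s => (Lag H (w s) (fw s)).toReal) volume t T := by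
        rw [intervalIntegrable_iff_integrableOn_Ioc_of_le ht.2]
        rw [intervalIntegrable_iff_integrableOn_Ioc_of_le ht.2] at hint2
        refine (integrableOn_congr_fun (fun s hs => ?_) measurableSet_Ioc).mpr hint2
        exact heq_cost2 s (by rwa [Set.uIoc_of_le ht.2])
      refine ⟨hi1.trans hi2, ?_⟩
      rw [← intervalIntegral.integral_add_adjacent_intervals hi1 hi2]
      have e1 : (∫ s in (0:ℝ)..t, (Lag H (w s) (fw s)).toReal) = c₁ := by
        rw [hc1]; exact intervalIntegral.integral_congr_ae hae_cost1
      have e2 : (∫ s in t..T, (Lag H (w s) (fw s)).toReal) = c₂ := by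
        rw [hc2]; exact intervalIntegral.integral_congr_ae
          (Filter.Eventually.of_forall heq_cost2)
      rw [e1, e2]


lemma bddBelow_fwdSet {n : ℕ} {H : EuclideanSpace ℝ (Fin n) → EuclideanSpace ℝ (Fin n) → ℝ}
    {M : ℝ} (hM : 1 ≤ M)
    (hLipP : ∀ x p q, |H x p - H x q| ≤ M * (1 + ‖x‖) * ‖p - q‖)
    (hLipX : ∀ x y p, |H x p - H y p| ≤ M * (1 + ‖p‖) * ‖x - y‖)
    {T : ℝ} (hT : 0 < T) (g₀ : EuclideanSpace ℝ (Fin n) → ℝ) (hg₀ : Continuous g₀)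
    (x₀ : EuclideanSpace ℝ (Fin n)) :
    BddBelow {r : ℝ | ∃ x f : ℝ → EuclideanSpace ℝ (Fin n), ∃ c : ℝ,
      IsAC T x f ∧ x T = x₀ ∧ HasCost H x f 0 T c ∧ r = g₀ (x 0) + c} := by
  set R : ℝ := ‖x₀‖ + (1 + ‖x₀‖) * Real.exp (M * T) with hR
  have hR0 : 0 ≤ R := by positivity
  obtain ⟨xm, hxm, hmin⟩ := (isCompact_closedBall (0 : EuclideanSpace ℝ (Fin n)) R).exists_isMinOn
    ⟨0, by simpa using hR0⟩ hg₀.continuousOn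
  refine ⟨g₀ xm - (|H 0 0| + M * R) * T, ?_⟩
  rintro r ⟨x, f, c, hAC, hxT, ⟨hne, hint, hc⟩, rfl⟩
  have hvel : ∀ s ∈ Icc (0:ℝ) T, ‖f s‖ ≤ M * (1 + ‖x s‖) := fun s hs =>
    velocity_bound (le_trans zero_le_one hM) hLipP (hne s hs)
  have hgr := gronwall_bound hM hT hAC hvel
  have hxball : ∀ s ∈ Icc (0:ℝ) T, ‖x s‖ ≤ R := by
    intro s hs
    have := hgr s hs
    rwa [hxT] at this
  have hg0 : g₀ xm ≤ g₀ (x 0) :=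
    hmin (mem_closedBall_zero_iff.mpr (hxball 0 ⟨le_rfl, hT.le⟩))
  have hpt : ∀ s ∈ Icc (0:ℝ) T, -(|H 0 0| + M * R) ≤ (Lag H (x s) (f s)).toReal := by
    intro s hs
    have h1 := lag_toReal_lb (hne s hs)
    have h2 : |H (x s) 0 - H 0 0| ≤ M * (1 + ‖(0 : EuclideanSpace ℝ (Fin n))‖) * ‖x s - 0‖ :=
      hLipX (x s) 0 0
    simp only [norm_zero, sub_zero, add_zero, mul_one] at h2
    have h3 : H (x s) 0 ≤ H 0 0 + M * ‖x s‖ := by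
      have := (abs_le.mp h2).2
      linarith
    have h4 : M * ‖x s‖ ≤ M * R :=
      mul_le_mul_of_nonneg_left (hxball s hs) (le_trans zero_le_one hM)
    have h5 := le_abs_self (H 0 0)
    linarith
  have hcost_lb : -((|H 0 0| + M * R) * T) ≤ c := by
    have := intervalIntegral.integral_mono_on hT.le intervalIntegrable_const hint hpt
    rw [intervalIntegral.integral_const, smul_eq_mul] at this
    rw [hc]
    nlinarith
  linarith

lemma bwd_at_T {n : ℕ} {H : EuclideanSpace ℝ (Fin n) → EuclideanSpace ℝ (Fin n) → ℝ}
    {T : ℝ} (gT : EuclideanSpace ℝ (Fin n) → ℝ) {q : EuclideanSpace ℝ (Fin n)}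
    {y fy : ℝ → EuclideanSpace ℝ (Fin n)} (hACy : IsAC T y fy) (hyT : y T = q)
    (hLagT : Lag H (y T) (fy T) ≠ ⊤) :
    bwdVal H T gT T q = gT q := by
  have hset : {r : ℝ | ∃ x f : ℝ → EuclideanSpace ℝ (Fin n), ∃ c : ℝ,
      IsAC T x f ∧ x T = q ∧ HasCost H x f T T c ∧ r = gT (x T) - c} = {gT q} := by
    apply Set.eq_singleton_iff_unique_mem.mpr
    constructor
    · refine ⟨y, fy, 0, hACy, hyT, ⟨?_, ?_, (intervalIntegral.integral_same).symm⟩, ?_⟩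
      · intro s hs
        have : s = T := le_antisymm hs.2 hs.1
        rw [this]; exact hLagT
      · rw [intervalIntegrable_iff]; simp
      · rw [hyT, sub_zero]
    · rintro r ⟨x, f, c', hACx, hxT, ⟨_, _, hc'⟩, rfl⟩
      have : c' = 0 := by rw [hc', intervalIntegral.integral_same]
      rw [this, hxT, sub_zero]
  rw [bwdVal, hset, csSup_singleton]
/-- Proposition 5.5: if `x̄` is a maximal optimal trajectory for the Bolza problem
and `U(T,·) = W(T,·)`, then `x̄` is a maximal optimal trajectory for the inverse
Bolza problem and `U = W` along `x̄`. -/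
theorem stmt_19 {n : ℕ} (H : EuclideanSpace ℝ (Fin n) → EuclideanSpace ℝ (Fin n) → ℝ)
    (hH : CondA H) (T : ℝ) (hT : 0 < T)
    (g₀ gT : EuclideanSpace ℝ (Fin n) → ℝ) (hg₀ : Continuous g₀) (hgT : Continuous gT)
    (U W : ℝ → EuclideanSpace ℝ (Fin n) → ℝ)
    (hU : U = fwdVal H T g₀) (hW : W = bwdVal H T gT)
    (xbar fbar : ℝ → EuclideanSpace ℝ (Fin n)) (c : ℝ)
    (hAC : IsAC T xbar fbar) (hc : HasCost H xbar fbar 0 T c)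
    -- `x̄` is a maximal optimal trajectory in the Bolza problem
    (hopt : U T (xbar T) = g₀ (xbar 0) + c)
    -- `U(T,·) = W(T,·)`
    (hTeq : ∀ x, U T x = W T x) :
    -- `x̄` is a maximal optimal trajectory in the inverse Bolza problem ...
    (W 0 (xbar 0) = gT (xbar T) - c) ∧
    -- ... and `U(t,x̄(t)) = W(t,x̄(t))` for all `t ∈ [0,T]`
    (∀ t ∈ Set.Icc (0 : ℝ) T, U t (xbar t) = W t (xbar t)) := by
  classical
  obtain ⟨M₀, hM₀, hconv, hLipP₀, hLipX₀⟩ := hH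
  set M : ℝ := M₀ + 1 with hMdef
  have hM : 1 ≤ M := by rw [hMdef]; linarith
  have hLipP : ∀ x p q, |H x p - H x q| ≤ M * (1 + ‖x‖) * ‖p - q‖ := by
    intro x p q
    refine le_trans (hLipP₀ x p q) ?_
    have h1 : (0:ℝ) ≤ (1 + ‖x‖) * ‖p - q‖ := by positivity
    rw [hMdef]
    nlinarith
  have hLipX : ∀ x y p, |H x p - H y p| ≤ M * (1 + ‖p‖) * ‖x - y‖ := by
    intro x y p
    refine le_trans (hLipX₀ x y p) ?_
    have h1 : (0:ℝ) ≤ (1 + ‖p‖) * ‖x - y‖ := by positivity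
    rw [hMdef]
    nlinarith
  have hbdd : ∀ q : EuclideanSpace ℝ (Fin n),
      BddBelow {r : ℝ | ∃ x f : ℝ → EuclideanSpace ℝ (Fin n), ∃ c : ℝ,
        IsAC T x f ∧ x T = q ∧ HasCost H x f 0 T c ∧ r = g₀ (x 0) + c} :=
    fun q => bddBelow_fwdSet hM hLipP hLipX hT g₀ hg₀ q
  have hTmem : T ∈ Icc (0:ℝ) T := ⟨hT.le, le_rfl⟩
  have hWT : W T (xbar T) = gT (xbar T) := by
    rw [hW]; exact bwd_at_T gT hAC rfl (hc.1 T hTmem)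
  have hgTxT : gT (xbar T) = g₀ (xbar 0) + c := by
    rw [← hWT, ← hTeq, hopt]
  have main : ∀ t ∈ Icc (0:ℝ) T,
      U t (xbar t) = g₀ (xbar 0) + (∫ s in (0:ℝ)..t, (Lag H (xbar s) (fbar s)).toReal) ∧
      W t (xbar t) = g₀ (xbar 0) + (∫ s in (0:ℝ)..t, (Lag H (xbar s) (fbar s)).toReal) := by
    intro t ht
    obtain ⟨hcost1, hcost2, hcsum⟩ := hasCost_split hc ht
    set c₁ : ℝ := ∫ s in (0:ℝ)..t, (Lag H (xbar s) (fbar s)).toReal with hc₁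
    set c₂ : ℝ := ∫ s in t..T, (Lag H (xbar s) (fbar s)).toReal with hc₂
    have hkey : gT (xbar T) - c₂ = g₀ (xbar 0) + c₁ := by
      rw [hgTxT]; rw [hcsum]; ring
    have claim2 : ∀ r ∈ {r : ℝ | ∃ y fy : ℝ → EuclideanSpace ℝ (Fin n), ∃ c' : ℝ,
        IsAC T y fy ∧ y t = xbar t ∧ HasCost H y fy t T c' ∧ r = gT (y T) - c'},
        r ≤ g₀ (xbar 0) + c₁ := by
      rintro r ⟨y, fy, c₂', hACy, hyt, hcosty, rfl⟩
      obtain ⟨w, fw, hACw, hw0, hwT, hcostw⟩ := concat_traj ht hAC hACy hyt.symm hcost1 hcosty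
      have hmem : g₀ (xbar 0) + (c₁ + c₂') ∈ {r : ℝ | ∃ x f : ℝ → EuclideanSpace ℝ (Fin n),
          ∃ c : ℝ, IsAC T x f ∧ x T = y T ∧ HasCost H x f 0 T c ∧ r = g₀ (x 0) + c} :=
        ⟨w, fw, c₁ + c₂', hACw, hwT, hcostw, by rw [hw0]⟩
      have hle : U T (y T) ≤ g₀ (xbar 0) + (c₁ + c₂') := by
        rw [hU]; unfold fwdVal; exact csInf_le (hbdd (y T)) hmem
      have hWTy : W T (y T) = gT (y T) := by
        rw [hW]; exact bwd_at_T gT hACy rfl (hcosty.1 T ⟨ht.2, le_rfl⟩)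
      have hgy : gT (y T) = U T (y T) := by rw [hTeq, hWTy]
      rw [hgy]
      linarith
    have claim1 : ∀ r ∈ {r : ℝ | ∃ z fz : ℝ → EuclideanSpace ℝ (Fin n), ∃ c' : ℝ,
        IsAC T z fz ∧ z t = xbar t ∧ HasCost H z fz 0 t c' ∧ r = g₀ (z 0) + c'},
        g₀ (xbar 0) + c₁ ≤ r := by
      rintro r ⟨z, fz, c₁', hACz, hzt, hcostz, rfl⟩
      obtain ⟨w, fw, hACw, hw0, hwT, hcostw⟩ := concat_traj ht hACz hAC hzt hcostz hcost2
      have hmem : g₀ (z 0) + (c₁' + c₂) ∈ {r : ℝ | ∃ x f : ℝ → EuclideanSpace ℝ (Fin n),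
          ∃ c : ℝ, IsAC T x f ∧ x T = xbar T ∧ HasCost H x f 0 T c ∧ r = g₀ (x 0) + c} :=
        ⟨w, fw, c₁' + c₂, hACw, hwT, hcostw, by rw [hw0]⟩
      have hle : U T (xbar T) ≤ g₀ (z 0) + (c₁' + c₂) := by
        rw [hU]; unfold fwdVal; exact csInf_le (hbdd (xbar T)) hmem
      rw [hopt] at hle
      rw [hcsum] at hle
      linarith
    have memU : g₀ (xbar 0) + c₁ ∈ {r : ℝ | ∃ z fz : ℝ → EuclideanSpace ℝ (Fin n), ∃ c' : ℝ,
        IsAC T z fz ∧ z t = xbar t ∧ HasCost H z fz 0 t c' ∧ r = g₀ (z 0) + c'} :=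
      ⟨xbar, fbar, c₁, hAC, rfl, hcost1, rfl⟩
    have memW : g₀ (xbar 0) + c₁ ∈ {r : ℝ | ∃ y fy : ℝ → EuclideanSpace ℝ (Fin n), ∃ c' : ℝ,
        IsAC T y fy ∧ y t = xbar t ∧ HasCost H y fy t T c' ∧ r = gT (y T) - c'} :=
      ⟨xbar, fbar, c₂, hAC, rfl, hcost2, hkey.symm⟩
    constructor
    · rw [hU]; unfold fwdVal
      exact IsLeast.csInf_eq ⟨memU, claim1⟩
    · rw [hW]; unfold bwdVal
      exact IsGreatest.csSup_eq ⟨memW, claim2⟩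
  constructor
  · have h0 := (main 0 ⟨le_rfl, hT.le⟩).2
    rw [intervalIntegral.integral_same] at h0
    rw [h0, hgTxT]
    ring
  · intro t ht
    rw [(main t ht).1, (main t ht).2]
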